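/- arXiv:2211.05326 — 2 statements merged into one kernel-verified Lean document; each statement's English description precedes it below -/
import Mathlib

section
/- Let H be a real Hilbert space and let 𝒯, 𝒜, 𝒫 : H → H be continuous linear operators. Suppose there exist constants ε, α > 0 such that 𝒫 is self-adjoint (𝒫 = 𝒫*), ⟨v, 𝒫v⟩ ≥ ε²‖v‖² for all v ∈ H, and ⟨𝒜v, 𝒫𝒯v⟩ + ⟨𝒯v, 𝒫𝒜v⟩ ≤ −2α⟨𝒯v, 𝒫𝒯v⟩ for all v ∈ H. Set ζ := √‖𝒫‖ (operator norm). Then every differentiable curve v : [0,∞) → H satisfying 𝒯(v′(t)) = 𝒜(v(t)) for all t ≥ 0 obeys ‖𝒯v(t)‖ ≤ (ζ/ε)·‖𝒯v(0)‖·e^{−αt} for all t ≥ 0. (Theorem 5 (stability as an LPI).) -/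
open Set
open scoped RealInnerProductSpace

/-!
The Lyapunov function `E t = ⟪𝒯 v t, 𝒫 𝒯 v t⟫` has right derivative
`⟪𝒜 v t, 𝒫 𝒯 v t⟫ + ⟪𝒯 v t, 𝒫 𝒜 v t⟫` along a solution, since `(𝒯 v)′ = 𝒯 v′ = 𝒜 v`; the LPI
bounds this by `-2α E t`, so Grönwall gives `E t ≤ E 0 e^{-2αt}`. Coercivity and the operator
norm sandwich `ε² ‖𝒯 v t‖² ≤ E t` and `E 0 ≤ ‖𝒫‖ ‖𝒯 v 0‖²`; taking square roots gives the claim.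
-/

section QuadraticForm

variable {H : Type*} [NormedAddCommGroup H] [InnerProductSpace ℝ H]

theorem ContinuousLinearMap.inner_apply_self_le (P : H →L[ℝ] H) (x : H) :
    ⟪x, P x⟫ ≤ ‖P‖ * ‖x‖ ^ 2 :=
  calc ⟪x, P x⟫ ≤ ‖x‖ * ‖P x‖ := real_inner_le_norm _ _
    _ ≤ ‖x‖ * (‖P‖ * ‖x‖) := by gcongr; exact P.le_opNorm x
    _ = ‖P‖ * ‖x‖ ^ 2 := by ring

theorem HasDerivWithinAt.inner_clm_apply_self {y : ℝ → H} {y' : H} {s : Set ℝ} {t : ℝ}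
    (P : H →L[ℝ] H) (hy : HasDerivWithinAt y y' s t) :
    HasDerivWithinAt (fun τ => ⟪y τ, P (y τ)⟫) (⟪y t, P y'⟫ + ⟪y', P (y t)⟫) s t :=
  hy.inner ℝ (P.hasFDerivAt.comp_hasDerivWithinAt t hy)

end QuadraticForm

theorem le_mul_exp_of_deriv_right_le_mul {f f' : ℝ → ℝ} {K a : ℝ}
    (hf : ContinuousOn f (Ici a))
    (hf' : ∀ t ∈ Ici a, HasDerivWithinAt f (f' t) (Ici t) t)
    (bound : ∀ t ∈ Ici a, f' t ≤ K * f t) :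
    ∀ t ∈ Ici a, f t ≤ f a * Real.exp (K * (t - a)) := by
  intro t ht
  have := le_gronwallBound_of_liminf_deriv_right_le (ε := 0) (hf.mono Icc_subset_Ici_self)
    (fun x hx _ hr => (hf' x hx.1).liminf_right_slope_le hr) le_rfl
    (fun x hx => (add_zero (K * f x)).symm ▸ bound x hx.1) t ⟨ht, le_rfl⟩
  rwa [gronwallBound_ε0] at this

section Lyapunov

variable {H : Type*} [NormedAddCommGroup H] [InnerProductSpace ℝ H]
  (T A P : H →L[ℝ] H) {v : ℝ → H}

theorem hasDerivWithinAt_inner_apply_self_of_solution (hv : DifferentiableOn ℝ v (Ici 0))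
    (hsol : ∀ t ∈ Ici (0:ℝ), T (derivWithin v (Ici 0) t) = A (v t)) {t : ℝ} (ht : t ∈ Ici 0) :
    HasDerivWithinAt (fun s => ⟪T (v s), P (T (v s))⟫)
      (⟪T (v t), P (A (v t))⟫ + ⟪A (v t), P (T (v t))⟫) (Ici t) t := by
  have hvt : HasDerivWithinAt v (derivWithin v (Ici 0) t) (Ici t) t :=
    (hv t ht).hasDerivWithinAt.mono (Ici_subset_Ici.2 ht)
  have hTvt : HasDerivWithinAt (fun s => T (v s)) (A (v t)) (Ici t) t :=
    hsol t ht ▸ T.hasFDerivAt.comp_hasDerivWithinAt t hvt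
  exact hTvt.inner_clm_apply_self P

end Lyapunov

theorem statement8_general {H : Type*}
    [NormedAddCommGroup H] [InnerProductSpace ℝ H]
    (T A P : H →L[ℝ] H) (ε α : ℝ) (hε : 0 < ε)
    (hPcoer : ∀ u : H, ε ^ 2 * ‖u‖ ^ 2 ≤ ⟪u, P u⟫)
    (hLPI : ∀ u : H, ⟪A u, P (T u)⟫ + ⟪T u, P (A u)⟫ ≤ -(2 * α) * ⟪T u, P (T u)⟫)
    (v : ℝ → H) (hv : DifferentiableOn ℝ v (Ici 0))
    (hsol : ∀ t ∈ Ici (0:ℝ), T (derivWithin v (Ici 0) t) = A (v t)) :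
    ∀ t ∈ Ici (0:ℝ),
      ‖T (v t)‖ ≤ (Real.sqrt ‖P‖ / ε) * ‖T (v 0)‖ * Real.exp (-α * t) := by
  intro t ht
  set E : ℝ → ℝ := fun s => ⟪T (v s), P (T (v s))⟫
  have hEcont : ContinuousOn E (Ici 0) :=
    (T.continuous.comp_continuousOn hv.continuousOn).inner
      ((P.continuous.comp T.continuous).comp_continuousOn hv.continuousOn)
  have hdecay : E t ≤ E 0 * Real.exp (-(2 * α) * (t - 0)) :=
    le_mul_exp_of_deriv_right_le_mul hEcont
      (fun s hs => hasDerivWithinAt_inner_apply_self_of_solution T A P hv hsol hs)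
      (fun s _ => by linarith [hLPI (v s)]) t ht
  have hsq : (ε * ‖T (v t)‖) ^ 2 ≤ (Real.sqrt ‖P‖ * ‖T (v 0)‖ * Real.exp (-α * t)) ^ 2 :=
    calc (ε * ‖T (v t)‖) ^ 2 = ε ^ 2 * ‖T (v t)‖ ^ 2 := by ring
      _ ≤ E t := hPcoer (T (v t))
      _ ≤ E 0 * Real.exp (-(2 * α) * (t - 0)) := hdecay
      _ ≤ ‖P‖ * ‖T (v 0)‖ ^ 2 * Real.exp (-(2 * α) * (t - 0)) := by
        gcongr; exact P.inner_apply_self_le _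
      _ = (Real.sqrt ‖P‖ * ‖T (v 0)‖ * Real.exp (-α * t)) ^ 2 := by
        rw [mul_pow, mul_pow, Real.sq_sqrt (norm_nonneg _), ← Real.exp_nat_mul]
        ring_nf
  have hle := le_of_pow_le_pow_left₀ two_ne_zero (by positivity) hsq
  rw [div_mul_eq_mul_div, div_mul_eq_mul_div, le_div_iff₀ hε]
  linarith

/-- Theorem 5, stability as an LPI: if `𝒫` is self-adjoint, coercive
(`⟨v,𝒫v⟩ ≥ ε²‖v‖²`) and satisfies the LPI
`⟨𝒜v,𝒫𝒯v⟩ + ⟨𝒯v,𝒫𝒜v⟩ ≤ -2α⟨𝒯v,𝒫𝒯v⟩`, then every differentiable solution of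
`𝒯v′(t) = 𝒜v(t)` satisfies `‖𝒯v(t)‖ ≤ (√‖𝒫‖/ε)‖𝒯v(0)‖ e^{-αt}`. -/
theorem statement8 {H : Type*}
    [NormedAddCommGroup H] [InnerProductSpace ℝ H] [CompleteSpace H]
    (T A P : H →L[ℝ] H) (ε α : ℝ) (hε : 0 < ε) (hα : 0 < α)
    (hPsa : ∀ u w : H, ⟪P u, w⟫ = ⟪u, P w⟫)
    (hPcoer : ∀ u : H, ε ^ 2 * ‖u‖ ^ 2 ≤ ⟪u, P u⟫)
    (hLPI : ∀ u : H, ⟪A u, P (T u)⟫ + ⟪T u, P (A u)⟫ ≤ -(2 * α) * ⟪T u, P (T u)⟫)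
    (v : ℝ → H) (hv : DifferentiableOn ℝ v (Ici 0))
    (hsol : ∀ t ∈ Ici (0:ℝ), T (derivWithin v (Ici 0) t) = A (v t)) :
    ∀ t ∈ Ici (0:ℝ),
      ‖T (v t)‖ ≤ (Real.sqrt ‖P‖ / ε) * ‖T (v 0)‖ * Real.exp (-α * t) :=
  statement8_general T A P ε α hε hPcoer hLPI v hv hsol
end

section
/- Let a < b be reals, m, n ≥ 1 integers, R₀ : [a,b] → ℝ^{m×n} bounded measurable, and R₁, R₂ : [a,b]×[a,b] → ℝ^{m×n} square-integrable. Define the 3-PI operator 𝒫[R] : L²([a,b];ℝⁿ) → L²([a,b];ℝᵐ) by (𝒫[R]u)(x) := R₀(x)u(x) + ∫ₐˣ R₁(x,θ)u(θ)dθ + ∫ₓᵇ R₂(x,θ)u(θ)dθ, and define adjoint parameters R̂₀(x) := R₀(x)ᵀ, R̂₁(x,θ) := R₂(θ,x)ᵀ, R̂₂(x,θ) := R₁(θ,x)ᵀ. Then for all u ∈ L²([a,b];ℝⁿ) and v ∈ L²([a,b];ℝᵐ), ⟨𝒫[R]u, v⟩_{L²} = ⟨u, 𝒫[R̂]v⟩_{L²};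 that is, the L² adjoint of a 3-PI operator is the 3-PI operator with parameters {R̂₀, R̂₁, R̂₂}. (Closure of the 3-PI class under adjoints, used throughout the paper.) -/
open MeasureTheory Set intervalIntegral Matrix

noncomputable section

/-- The 3-PI operator `𝒫[R]` with parameters `R = {R₀, R₁, R₂}`:
`(𝒫[R]u)(x) = R₀(x)u(x) + ∫ₐˣ R₁(x,θ)u(θ)dθ + ∫ₓᵇ R₂(x,θ)u(θ)dθ`. -/
def P3op (a b : ℝ) {m n : ℕ} (R0 : ℝ → Matrix (Fin m) (Fin n) ℝ)
    (R1 R2 : ℝ → ℝ → Matrix (Fin m) (Fin n) ℝ)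
    (u : ℝ → Fin n → ℝ) (x : ℝ) : Fin m → ℝ :=
  (R0 x).mulVec (u x) + (∫ θ in a..x, (R1 x θ).mulVec (u θ))
    + ∫ θ in x..b, (R2 x θ).mulVec (u θ)

end

/-!
The multiplier part of `𝒫[R]` is adjoint pointwise: `(R₀u)·v = u·(R₀ᵀv)`. For the lower
Volterra part, the scalar integrand `H(x,θ) = (R₁(x,θ)u(θ))·v(x)` is integrable on the square,
being a sum of products of `R₁ᵢⱼ ∈ L²` with `vᵢ(x)uⱼ(θ) ∈ L²`; Fubini on the triangle `θ ≤ x`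
turns `∫ₐᵇ∫ₐˣ H` into `∫ₐᵇ∫_θᵇ H`, which is the pairing of `u` with the upper Volterra operator
of kernel `R₁(θ,x)ᵀ`. The upper Volterra part of `R₂` is the same identity read with the
roles of `(u, R)` and `(v, R̂)` exchanged.
-/

open scoped ENNReal

section Integrability

variable {α β : Type*} [MeasurableSpace α] [MeasurableSpace β] {μ : Measure α} {ν : Measure β}
  {ι κ : Type*} [Fintype ι] [Fintype κ] {p q : ℝ≥0∞} [ENNReal.HolderTriple p q 1]

lemma memLp_two_mul_prod [SFinite ν] {f : α → ℝ} {g : β → ℝ} (hf : MemLp f 2 μ)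
    (hg : MemLp g 2 ν) : MemLp (fun z : α × β => f z.1 * g z.2) 2 (μ.prod ν) := by
  refine (memLp_two_iff_integrable_sq (hf.1.comp_fst.mul hg.1.comp_snd)).2 ?_
  simpa only [Pi.mul_apply, mul_pow] using hf.integrable_sq.mul_prod hg.integrable_sq

lemma integrable_mulVec {F : α → Matrix ι κ ℝ} {w : α → κ → ℝ}
    (hF : ∀ i j, MemLp (fun x => F x i j) p μ) (hw : MemLp w q μ) :
    Integrable (fun x => F x *ᵥ w x) μ :=
  Integrable.of_eval fun i => by
    simpa only [mulVec, dotProduct, Pi.mul_apply] using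
      integrable_finsetSum _ fun j _ => (hF i j).integrable_mul (hw.eval j)

lemma integrable_mulVec_dotProduct {F : α → Matrix ι κ ℝ} {w : α → κ → ℝ} {z : α → ι → ℝ}
    (hF : ∀ i j, MemLp (fun x => F x i j) p μ)
    (hzw : ∀ i j, MemLp (fun x => z x i * w x j) q μ) :
    Integrable (fun x => F x *ᵥ w x ⬝ᵥ z x) μ := by
  have h : ∀ x, F x *ᵥ w x ⬝ᵥ z x = ∑ i, ∑ j, F x i j * (z x i * w x j) := fun x => by
    simp only [mulVec, dotProduct, Finset.sum_mul]
    exact Finset.sum_congr rfl fun i _ => Finset.sum_congr rfl fun j _ => by ring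
  simpa only [h, Pi.mul_apply] using integrable_finsetSum _ fun i _ =>
    integrable_finsetSum _ fun j _ => (hF i j).integrable_mul (hzw i j)

end Integrability

lemma dotProduct_intervalIntegral {ι : Type*} [Fintype ι] (w : ι → ℝ) {g : ℝ → ι → ℝ}
    {c d : ℝ} (hg : IntervalIntegrable g volume c d) :
    w ⬝ᵥ ∫ θ in c..d, g θ = ∫ θ in c..d, w ⬝ᵥ g θ :=
  ((dotProductBilin ℝ ℝ w).toContinuousLinearMap.intervalIntegral_comp_comm hg).symm

section TriangleFubini

variable {E : Type*} [NormedAddCommGroup E] [NormedSpace ℝ E] {a b : ℝ}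

lemma intervalIntegral_eq_integral_indicator_Iic {x : ℝ} (hx : x ∈ Icc a b) (F : ℝ → E) :
    ∫ θ in a..x, F θ = ∫ θ in Icc a b, (Iic x).indicator F θ := by
  have hI : Iic x ∩ Icc a b = Icc a x :=
    ext fun _ => ⟨fun h => ⟨h.2.1, h.1⟩, fun h => ⟨h.2, h.1, h.2.trans hx.2⟩⟩
  rw [MeasureTheory.integral_indicator measurableSet_Iic,
    Measure.restrict_restrict measurableSet_Iic, hI, integral_of_le hx.1,
    integral_Icc_eq_integral_Ioc]

lemma intervalIntegral_eq_integral_indicator_Ici {x : ℝ} (hx : x ∈ Icc a b) (F : ℝ → E) :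
    ∫ θ in x..b, F θ = ∫ θ in Icc a b, (Ici x).indicator F θ := by
  have hI : Ici x ∩ Icc a b = Icc x b :=
    ext fun _ => ⟨fun h => ⟨h.1, h.2.2⟩, fun h => ⟨h.1, hx.1.trans h.1, h.2⟩⟩
  rw [MeasureTheory.integral_indicator measurableSet_Ici,
    Measure.restrict_restrict measurableSet_Ici, hI, integral_of_le hx.2,
    integral_Icc_eq_integral_Ioc]

variable (H : ℝ × ℝ → E)

lemma intervalIntegral_lower_ae_eq_integral_indicator :
    (fun x => ∫ θ in a..x, H (x, θ)) =ᵐ[volume.restrict (Icc a b)]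
      fun x => ∫ θ in Icc a b, {q : ℝ × ℝ | q.2 ≤ q.1}.indicator H (x, θ) := by
  filter_upwards [ae_restrict_mem measurableSet_Icc] with x hx
  exact intervalIntegral_eq_integral_indicator_Iic hx _

lemma intervalIntegral_upper_ae_eq_integral_indicator :
    (fun θ => ∫ x in θ..b, H (x, θ)) =ᵐ[volume.restrict (Icc a b)]
      fun θ => ∫ x in Icc a b, {q : ℝ × ℝ | q.2 ≤ q.1}.indicator H (x, θ) := by
  filter_upwards [ae_restrict_mem measurableSet_Icc] with θ hθ
  exact intervalIntegral_eq_integral_indicator_Ici hθ _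

variable {H}

lemma MeasureTheory.Integrable.intervalIntegral_lower
    (hH : Integrable H ((volume.restrict (Icc a b)).prod (volume.restrict (Icc a b)))) :
    IntegrableOn (fun x => ∫ θ in a..x, H (x, θ)) (Icc a b) :=
  (hH.indicator (measurableSet_le measurable_snd measurable_fst)).integral_prod_left.congr
    (intervalIntegral_lower_ae_eq_integral_indicator H).symm

lemma MeasureTheory.Integrable.intervalIntegral_upper
    (hH : Integrable H ((volume.restrict (Icc a b)).prod (volume.restrict (Icc a b)))) :
    IntegrableOn (fun θ => ∫ x in θ..b, H (x, θ)) (Icc a b) :=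
  (hH.indicator (measurableSet_le measurable_snd measurable_fst)).integral_prod_right.congr
    (intervalIntegral_upper_ae_eq_integral_indicator H).symm

theorem integral_intervalIntegral_lower_eq_upper
    (hH : Integrable H ((volume.restrict (Icc a b)).prod (volume.restrict (Icc a b)))) :
    ∫ x in Icc a b, ∫ θ in a..x, H (x, θ) = ∫ θ in Icc a b, ∫ x in θ..b, H (x, θ) := by
  rw [integral_congr_ae (intervalIntegral_lower_ae_eq_integral_indicator H),
    integral_congr_ae (intervalIntegral_upper_ae_eq_integral_indicator H)]
  exact integral_integral_swap (hH.indicator (measurableSet_le measurable_snd measurable_fst))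

end TriangleFubini

section Volterra

variable {ι κ : Type*} [Fintype ι] [Fintype κ] {a b : ℝ} {K : ℝ → ℝ → Matrix ι κ ℝ}
  {u : ℝ → κ → ℝ} {v : ℝ → ι → ℝ}

theorem volterraLower_adjoint
    (hK : ∀ i j, MemLp (fun q : ℝ × ℝ => K q.1 q.2 i j) 2
      ((volume.restrict (Icc a b)).prod (volume.restrict (Icc a b))))
    (hu : MemLp u 2 (volume.restrict (Icc a b))) (hv : MemLp v 2 (volume.restrict (Icc a b))) :
    IntegrableOn (fun x => (∫ θ in a..x, K x θ *ᵥ u θ) ⬝ᵥ v x) (Icc a b) ∧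
    IntegrableOn (fun θ => u θ ⬝ᵥ ∫ x in θ..b, (K x θ)ᵀ *ᵥ v x) (Icc a b) ∧
    ∫ x in Icc a b, (∫ θ in a..x, K x θ *ᵥ u θ) ⬝ᵥ v x
      = ∫ θ in Icc a b, u θ ⬝ᵥ ∫ x in θ..b, (K x θ)ᵀ *ᵥ v x := by
  set μ := volume.restrict (Icc a b)
  have hH : Integrable (fun q : ℝ × ℝ => K q.1 q.2 *ᵥ u q.2 ⬝ᵥ v q.1) (μ.prod μ) :=
    integrable_mulVec_dotProduct hK fun i j => memLp_two_mul_prod (hv.eval i) (hu.eval j)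
  have hKu : Integrable (fun q : ℝ × ℝ => K q.1 q.2 *ᵥ u q.2) (μ.prod μ) :=
    integrable_mulVec hK (hu.comp_snd μ)
  have hKv : Integrable (fun q : ℝ × ℝ => (K q.1 q.2)ᵀ *ᵥ v q.1) (μ.prod μ) :=
    integrable_mulVec (fun i j => hK j i) (hv.comp_fst μ)
  have hlower : (fun x => (∫ θ in a..x, K x θ *ᵥ u θ) ⬝ᵥ v x)
      =ᵐ[μ] fun x => ∫ θ in a..x, K x θ *ᵥ u θ ⬝ᵥ v x := by
    filter_upwards [hKu.prod_right_ae, ae_restrict_mem measurableSet_Icc] with x hx hxab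
    have hint : IntervalIntegrable (fun θ => K x θ *ᵥ u θ) volume a x := by
      refine IntegrableOn.intervalIntegrable (IntegrableOn.mono_set hx ?_)
      exact uIcc_subset_Icc (left_mem_Icc.2 (hxab.1.trans hxab.2)) hxab
    rw [dotProduct_comm, dotProduct_intervalIntegral _ hint]
    simp only [dotProduct_comm (v x)]
  have hupper : (fun θ => u θ ⬝ᵥ ∫ x in θ..b, (K x θ)ᵀ *ᵥ v x)
      =ᵐ[μ] fun θ => ∫ x in θ..b, K x θ *ᵥ u θ ⬝ᵥ v x := by
    filter_upwards [hKv.prod_left_ae, ae_restrict_mem measurableSet_Icc] with θ hθ hθab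
    have hint : IntervalIntegrable (fun x => (K x θ)ᵀ *ᵥ v x) volume θ b := by
      refine IntegrableOn.intervalIntegrable (IntegrableOn.mono_set hθ ?_)
      exact uIcc_subset_Icc hθab (right_mem_Icc.2 (hθab.1.trans hθab.2))
    rw [dotProduct_intervalIntegral _ hint]
    simp only [dotProduct_mulVec, vecMul_transpose]
  refine ⟨hH.intervalIntegral_lower.congr hlower.symm,
    hH.intervalIntegral_upper.congr hupper.symm, ?_⟩
  rw [integral_congr_ae hlower, integral_congr_ae hupper]
  exact integral_intervalIntegral_lower_eq_upper hH

theorem volterraUpper_adjoint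
    (hK : ∀ i j, MemLp (fun q : ℝ × ℝ => K q.1 q.2 i j) 2
      ((volume.restrict (Icc a b)).prod (volume.restrict (Icc a b))))
    (hu : MemLp u 2 (volume.restrict (Icc a b))) (hv : MemLp v 2 (volume.restrict (Icc a b))) :
    IntegrableOn (fun x => (∫ θ in x..b, K x θ *ᵥ u θ) ⬝ᵥ v x) (Icc a b) ∧
    IntegrableOn (fun θ => u θ ⬝ᵥ ∫ x in a..θ, (K x θ)ᵀ *ᵥ v x) (Icc a b) ∧
    ∫ x in Icc a b, (∫ θ in x..b, K x θ *ᵥ u θ) ⬝ᵥ v x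
      = ∫ θ in Icc a b, u θ ⬝ᵥ ∫ x in a..θ, (K x θ)ᵀ *ᵥ v x := by
  have hKswap : ∀ i j, MemLp (fun q : ℝ × ℝ => (K q.2 q.1)ᵀ i j) 2
      ((volume.restrict (Icc a b)).prod (volume.restrict (Icc a b))) := fun i j =>
    (hK j i).comp_measurePreserving Measure.measurePreserving_swap
  obtain ⟨hlower, hupper, h⟩ := volterraLower_adjoint (K := fun x θ => (K θ x)ᵀ) hKswap hv hu
  simp only [transpose_transpose] at hupper h
  refine ⟨hupper.congr (ae_of_all _ fun _ => dotProduct_comm _ _),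
    hlower.congr (ae_of_all _ fun _ => dotProduct_comm _ _), ?_⟩
  convert h.symm using 3 <;> exact dotProduct_comm _ _

end Volterra

theorem statement16_general (a b : ℝ) (m n : ℕ)
    (R0 : ℝ → Matrix (Fin m) (Fin n) ℝ)
    (hR0meas : ∀ i j, Measurable fun x => R0 x i j)
    (hR0bdd : ∃ C, ∀ x ∈ Icc a b, ∀ i j, |R0 x i j| ≤ C)
    (R1 R2 : ℝ → ℝ → Matrix (Fin m) (Fin n) ℝ)
    (hR1meas : ∀ i j, Measurable fun q : ℝ × ℝ => R1 q.1 q.2 i j)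
    (hR2meas : ∀ i j, Measurable fun q : ℝ × ℝ => R2 q.1 q.2 i j)
    (hR1sq : ∀ i j, IntegrableOn (fun q : ℝ × ℝ => (R1 q.1 q.2 i j) ^ 2)
      (Icc a b ×ˢ Icc a b))
    (hR2sq : ∀ i j, IntegrableOn (fun q : ℝ × ℝ => (R2 q.1 q.2 i j) ^ 2)
      (Icc a b ×ˢ Icc a b))
    (u : ℝ → Fin n → ℝ) (hu : MemLp u 2 (volume.restrict (Icc a b)))
    (v : ℝ → Fin m → ℝ) (hv : MemLp v 2 (volume.restrict (Icc a b))) :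
    (∫ x in Icc a b, P3op a b R0 R1 R2 u x ⬝ᵥ v x)
      = ∫ x in Icc a b,
          u x ⬝ᵥ P3op a b (fun x => (R0 x)ᵀ) (fun x θ => (R2 θ x)ᵀ)
            (fun x θ => (R1 θ x)ᵀ) v x := by
  set μ := volume.restrict (Icc a b)
  have hprod : μ.prod μ = volume.restrict (Icc a b ×ˢ Icc a b) := by
    rw [Measure.prod_restrict, ← Measure.volume_eq_prod]
  have hR1 : ∀ i j, MemLp (fun q : ℝ × ℝ => R1 q.1 q.2 i j) 2 (μ.prod μ) := fun i j =>
    (memLp_two_iff_integrable_sq (hR1meas i j).aestronglyMeasurable).2 (hprod ▸ hR1sq i j)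
  have hR2 : ∀ i j, MemLp (fun q : ℝ × ℝ => R2 q.1 q.2 i j) 2 (μ.prod μ) := fun i j =>
    (memLp_two_iff_integrable_sq (hR2meas i j).aestronglyMeasurable).2 (hprod ▸ hR2sq i j)
  have hR0 : ∀ i j, MemLp (fun x => R0 x i j) ∞ μ := fun i j => by
    obtain ⟨C, hC⟩ := hR0bdd
    refine memLp_top_of_bound (hR0meas i j).aestronglyMeasurable C ?_
    filter_upwards [ae_restrict_mem measurableSet_Icc] with x hx using hC x hx i j
  have hT0 : Integrable (fun x => R0 x *ᵥ u x ⬝ᵥ v x) μ :=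
    integrable_mulVec_dotProduct hR0 fun i j =>
      memLp_one_iff_integrable.2 ((hv.eval i).integrable_mul (hu.eval j))
  obtain ⟨hT1, hS1, h1⟩ := volterraLower_adjoint hR1 hu hv
  obtain ⟨hT2, hS2, h2⟩ := volterraUpper_adjoint hR2 hu hv
  simp only [P3op, add_dotProduct, dotProduct_add, dotProduct_mulVec (u _), vecMul_transpose]
  rw [integral_add ?_ hT2, integral_add hT0 hT1, integral_add ?_ hS1,
    integral_add hT0 hS2, h1, h2]
  · ring
  exacts [hT0.add hS2, hT0.add hT1]

/-- closure of the 3-PI class under adjoints: for all `u, v ∈ L²`,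
`⟨𝒫[R]u, v⟩ = ⟨u, 𝒫[R̂]v⟩`, where `R̂₀(x) = R₀(x)ᵀ`, `R̂₁(x,θ) = R₂(θ,x)ᵀ`,
`R̂₂(x,θ) = R₁(θ,x)ᵀ`. -/
theorem statement16 (a b : ℝ) (hab : a < b) (m n : ℕ) (hm : 1 ≤ m) (hn : 1 ≤ n)
    (R0 : ℝ → Matrix (Fin m) (Fin n) ℝ)
    (hR0meas : ∀ i j, Measurable fun x => R0 x i j)
    (hR0bdd : ∃ C, ∀ x ∈ Icc a b, ∀ i j, |R0 x i j| ≤ C)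
    (R1 R2 : ℝ → ℝ → Matrix (Fin m) (Fin n) ℝ)
    (hR1meas : ∀ i j, Measurable fun q : ℝ × ℝ => R1 q.1 q.2 i j)
    (hR2meas : ∀ i j, Measurable fun q : ℝ × ℝ => R2 q.1 q.2 i j)
    (hR1sq : ∀ i j, IntegrableOn (fun q : ℝ × ℝ => (R1 q.1 q.2 i j) ^ 2)
      (Icc a b ×ˢ Icc a b))
    (hR2sq : ∀ i j, IntegrableOn (fun q : ℝ × ℝ => (R2 q.1 q.2 i j) ^ 2)
      (Icc a b ×ˢ Icc a b))
    (u : ℝ → Fin n → ℝ) (hu : MemLp u 2 (volume.restrict (Icc a b)))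
    (v : ℝ → Fin m → ℝ) (hv : MemLp v 2 (volume.restrict (Icc a b))) :
    (∫ x in Icc a b, P3op a b R0 R1 R2 u x ⬝ᵥ v x)
      = ∫ x in Icc a b,
          u x ⬝ᵥ P3op a b (fun x => (R0 x)ᵀ) (fun x θ => (R2 θ x)ᵀ)
            (fun x θ => (R1 θ x)ᵀ) v x :=
  statement16_general a b m n R0 hR0meas hR0bdd R1 R2 hR1meas hR2meas hR1sq hR2sq u hu v hv
end
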